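/- Let P be a row-finite matrix indexed by ℕ×ℕ with entries in a commutative ring, and define the output matrix A by A_{nk} = (P^n)_{0k}. Then every k×k minor of A can be written as a sum of products of minors of size ≤ k of P. Consequently, if P is totally positive of order r over a partially ordered commutative ring, then so is A. -/

import Mathlib

/-!
Row `n + 1` of the output matrix `A` is row `n` times `P`, and the rows of `A` have finite
support. So a minor of `A` avoiding row `0` is, by the Cauchy–Binet formula over a finite set of
columns, a sum of products of a minor of `A` with every row index lowered by one and a minor of `P`
of the same size. A minor containing row `0 = e₀` is, by Laplace expansion along that row, either zero or a
smaller minor of `A`. Induction on the size plus the sum of the row indices gives the first claim;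
total positivity follows since a subsemiring generated by nonnegative elements is nonnegative.
-/

/-- A matrix is row-finite if each of its rows has finitely many nonzero entries. -/
def RowFinite {R : Type*} [Zero R] (P : ℕ → ℕ → R) : Prop :=
  ∀ i : ℕ, {j : ℕ | P i j ≠ 0}.Finite

/-- The output matrix of a production matrix `P`: `A_{nk} = (P^n)_{0k}`. -/
noncomputable def outputMatrix {R : Type*} [CommRing R] (P : ℕ → ℕ → R) : ℕ → ℕ → R
  | 0, k => if k = 0 then 1 else 0
  | n + 1, k => ∑ᶠ j : ℕ, outputMatrix P n j * P j k

/-- The minor of an infinite matrix `M : ℕ → ℕ → R` with rows `f 0 < f 1 < ⋯`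
and columns `g 0 < g 1 < ⋯` (for strictly monotone `f, g`). -/
noncomputable def submatrixDet {R : Type*} [CommRing R] (M : ℕ → ℕ → R) {k : ℕ}
    (f g : Fin k → ℕ) : R :=
  Matrix.det (Matrix.of fun i j => M (f i) (g j))

open Finset Function Equiv

lemma OrderEmbedding.exists_comp_perm_of_injective {J : Type*} [LinearOrder J] {k : ℕ}
    {r : Fin k → J} (hr : Injective r) :
    ∃ (e : Fin k ↪o J) (σ : Perm (Fin k)), r = e ∘ σ := by
  classical
  have hcard : (univ.image r).card = k := by simp [card_image_of_injective _ hr]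
  set e := (univ.image r).orderEmbOfFin hcard
  have hmem : ∀ i, r i ∈ Set.range e := fun i => by simp [e]
  choose τ hτ using hmem
  have hτ_inj : Injective τ := fun a b hab => hr (by rw [← hτ a, ← hτ b, hab])
  exact ⟨e, Equiv.ofBijective τ (Finite.injective_iff_bijective.mp hτ_inj),
    funext fun i => (hτ i).symm⟩

lemma OrderEmbedding.comp_perm_injective {J : Type*} [LinearOrder J] {k : ℕ} :
    Injective fun p : (Fin k ↪o J) × Perm (Fin k) => ⇑p.1 ∘ ⇑p.2 := by
  rintro ⟨e, σ⟩ ⟨e', σ'⟩ h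
  have he : e = e' := by
    have h' : ⇑e ∘ ⇑σ = ⇑e' ∘ ⇑σ' := h
    rw [← OrderEmbedding.range_inj, ← σ.surjective.range_comp e, ← σ'.surjective.range_comp e', h']
  subst he
  exact Prod.ext rfl (Equiv.ext fun i => e.injective (congrFun h i))

lemma Fintype.sum_eq_sum_orderEmbedding_perm {J β : Type*} [Fintype J] [LinearOrder J]
    [AddCommMonoid β] {k : ℕ} (F : (Fin k → J) → β) (hF : ∀ r, ¬Injective r → F r = 0) :
    ∑ r, F r = ∑ e : Fin k ↪o J, ∑ σ : Perm (Fin k), F (e ∘ σ) := by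
  classical
  rw [← Fintype.sum_prod_type',
    ← sum_image (fun p _ q _ h => OrderEmbedding.comp_perm_injective h)]
  refine (Finset.sum_subset (subset_univ _) fun r _ hr => hF r fun hinj => hr ?_).symm
  obtain ⟨e, σ, rfl⟩ := OrderEmbedding.exists_comp_perm_of_injective hinj
  exact mem_image_of_mem _ (mem_univ (e, σ))

namespace Matrix

variable {R : Type*} [CommRing R]

lemma det_mul_eq_sum_prod_mul_det_submatrix {m J : Type*} [Fintype m] [DecidableEq m]
    [Fintype J] (M : Matrix m J R) (N : Matrix J m R) :
    (M * N).det = ∑ r : m → J, (∏ i, N (r i) i) * (M.submatrix id r).det := by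
  simp only [det_apply', mul_apply, prod_univ_sum, mul_sum, Fintype.piFinset_univ,
    submatrix_apply, id, prod_mul_distrib]
  rw [sum_comm]
  refine sum_congr rfl fun r _ => sum_congr rfl fun σ _ => ?_
  ring

theorem det_mul_eq_sum_orderEmbedding {J : Type*} [Fintype J] [LinearOrder J] {k : ℕ}
    (M : Matrix (Fin k) J R) (N : Matrix J (Fin k) R) :
    (M * N).det = ∑ e : Fin k ↪o J, (M.submatrix id e).det * (N.submatrix e id).det := by
  rw [det_mul_eq_sum_prod_mul_det_submatrix, Fintype.sum_eq_sum_orderEmbedding_perm]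
  · refine sum_congr rfl fun e _ => ?_
    simp only [det_apply' (N.submatrix e id), mul_sum]
    refine sum_congr rfl fun σ _ => ?_
    rw [show M.submatrix id (e ∘ σ) = (M.submatrix id e).submatrix id σ from rfl, det_permute']
    simp only [submatrix_apply, id, Function.comp_apply]
    ring
  · intro r hr
    obtain ⟨i, j, hij, hne⟩ : ∃ i j, r i = r j ∧ i ≠ j := by
      simpa [Injective] using hr
    rw [det_zero_of_column_eq hne (fun _ => by simp [hij]), mul_zero]

end Matrix

section Minors

variable {R : Type*} [CommRing R]

def minorsLE (M : ℕ → ℕ → R) (k : ℕ) : Set R :=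
  {x | ∃ k' ≤ k, ∃ f g : Fin k' → ℕ, StrictMono f ∧ StrictMono g ∧ x = submatrixDet M f g}

lemma minorsLE_mono (M : ℕ → ℕ → R) : Monotone (minorsLE M) :=
  fun _ _ hkl _ ⟨k', hk', f, g, hf, hg, hx⟩ => ⟨k', hk'.trans hkl, f, g, hf, hg, hx⟩

lemma submatrixDet_mem_minorsLE {M : ℕ → ℕ → R} {k : ℕ} {f g : Fin k → ℕ} (hf : StrictMono f)
    (hg : StrictMono g) : submatrixDet M f g ∈ minorsLE M k :=
  ⟨k, le_rfl, f, g, hf, hg, rfl⟩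

lemma submatrixDet_of_head_row_eq_single {M : ℕ → ℕ → R} {k : ℕ} {f g : Fin (k + 1) → ℕ}
    (hrow : M (f 0) = Pi.single 0 1) (hg : StrictMono g) :
    submatrixDet M f g = if g 0 = 0 then submatrixDet M (f ∘ Fin.succ) (g ∘ Fin.succ) else 0 := by
  have htail : ∀ j : Fin k, g j.succ ≠ 0 := fun j => (hg (Fin.succ_pos j)).ne_bot
  rw [submatrixDet, Matrix.det_succ_row_zero, Fin.sum_univ_succ]
  simp only [Matrix.of_apply, hrow, Pi.single_apply, htail, if_false, mul_zero, zero_mul,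
    sum_const_zero, add_zero, Fin.val_zero, pow_zero, one_mul, Fin.succAbove_zero]
  split_ifs <;> simp only [one_mul, zero_mul]; rfl

end Minors

section OutputMatrix

variable {R : Type*} [CommRing R] {P : ℕ → ℕ → R}

lemma outputMatrix_succ_apply_eq_sum {n : ℕ} {T : Finset ℕ}
    (hT : {j | outputMatrix P n j ≠ 0} ⊆ T) (c : ℕ) :
    outputMatrix P (n + 1) c = ∑ t ∈ T, outputMatrix P n t * P t c :=
  finsum_eq_finsetSum_of_support_subset _ ((support_mul_subset_left _ _).trans hT)

lemma rowFinite_outputMatrix (hP : RowFinite P) : RowFinite (outputMatrix P) := by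
  intro n
  induction n with
  | zero => exact (Set.finite_singleton 0).subset fun j hj => by_contra fun h => hj (if_neg h)
  | succ n ih =>
    have hrow : outputMatrix P (n + 1) = fun c => ∑ t ∈ ih.toFinset, outputMatrix P n t * P t c :=
      funext (outputMatrix_succ_apply_eq_sum (by simp))
    refine (ih.toFinset.finite_toSet.biUnion fun t _ => hP t).subset ?_
    rw [hrow]
    exact (Finset.support_sum _ _).trans
      (Set.biUnion_mono subset_rfl fun t _ => support_mul_subset_right _ _)

lemma submatrixDet_outputMatrix_succ {k : ℕ} (f g : Fin k → ℕ) {T : Finset ℕ}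
    (hT : ∀ i, {j | outputMatrix P (f i) j ≠ 0} ⊆ T) :
    submatrixDet (outputMatrix P) (fun i => f i + 1) g =
      ∑ e : Fin k ↪o T, submatrixDet (outputMatrix P) f (Subtype.val ∘ e) *
        submatrixDet P (Subtype.val ∘ e) g := by
  have hfactor : Matrix.of (fun i j => outputMatrix P (f i + 1) (g j)) =
      Matrix.of (fun i (t : T) => outputMatrix P (f i) t) *
        Matrix.of (fun (t : T) j => P t (g j)) := by
    ext i j
    simp only [Matrix.of_apply, Matrix.mul_apply, outputMatrix_succ_apply_eq_sum (hT i)]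
    exact (Finset.sum_attach T _).symm
  rw [submatrixDet, hfactor, Matrix.det_mul_eq_sum_orderEmbedding]
  rfl

theorem submatrixDet_outputMatrix_mem_closure (hP : RowFinite P) :
    ∀ {k : ℕ} (f g : Fin k → ℕ), StrictMono f → StrictMono g →
      submatrixDet (outputMatrix P) f g ∈ Subsemiring.closure (minorsLE P k)
  | 0, f, g, _, _ => by simp [submatrixDet, one_mem]
  | k + 1, f, g, hf, hg => by
    by_cases hf0 : f 0 = 0
    · have hrow : outputMatrix P (f 0) = Pi.single 0 1 := by
        ext j; simp [hf0, outputMatrix, Pi.single_apply]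
      rw [submatrixDet_of_head_row_eq_single hrow hg]
      split_ifs
      · exact Subsemiring.closure_mono (minorsLE_mono P k.le_succ)
          (submatrixDet_outputMatrix_mem_closure hP _ _ (hf.comp Fin.strictMono_succ)
            (hg.comp Fin.strictMono_succ))
      · exact zero_mem _
    · obtain ⟨f', rfl⟩ : ∃ f' : Fin (k + 1) → ℕ, f = fun i => f' i + 1 :=
        ⟨fun i => f i - 1, funext fun i => by
          have := hf.monotone (Fin.zero_le i); show f i = f i - 1 + 1; omega⟩
      have hf' : StrictMono f' := fun a b h => by simpa using hf h
      obtain ⟨T, hT⟩ : ∃ T : Finset ℕ, ∀ i, {j | outputMatrix P (f' i) j ≠ 0} ⊆ T :=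
        ⟨(Set.finite_iUnion fun i => rowFinite_outputMatrix hP (f' i)).toFinset,
          fun i => by simpa using Set.subset_iUnion (fun i => {j | outputMatrix P (f' i) j ≠ 0}) i⟩
      rw [submatrixDet_outputMatrix_succ f' g hT]
      refine sum_mem fun e _ => mul_mem ?_ (Subsemiring.subset_closure
        (submatrixDet_mem_minorsLE ((Subtype.strictMono_coe _).comp e.strictMono) hg))
      exact submatrixDet_outputMatrix_mem_closure hP f' _ hf'
        ((Subtype.strictMono_coe _).comp e.strictMono)
termination_by k f => k + ∑ i, f i
decreasing_by
  · simp only [Fin.sum_univ_succ, Function.comp_apply]; omega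
  · subst_vars; simp [Finset.sum_add_distrib]

end OutputMatrix

/-- Every `k×k` minor of the output matrix `A = 𝒪(P)` is a sum of products of
minors of size `≤ k` of `P`.  Consequently, if `P` is totally positive of order `r`
over a partially ordered commutative ring, then so is `A`. -/
theorem stmt_16 :
    (∀ (R : Type) [CommRing R] (P : ℕ → ℕ → R), RowFinite P →
      ∀ (k : ℕ) (f g : Fin k → ℕ), StrictMono f → StrictMono g →
        submatrixDet (outputMatrix P) f g ∈
          Subsemiring.closure {x : R | ∃ k' ≤ k, ∃ f' g' : Fin k' → ℕ,
            StrictMono f' ∧ StrictMono g' ∧ x = submatrixDet P f' g'})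
    ∧ (∀ (R : Type) [CommRing R] [PartialOrder R] [IsOrderedRing R] (P : ℕ → ℕ → R), RowFinite P → ∀ r : ℕ,
        (∀ k ≤ r, ∀ f g : Fin k → ℕ, StrictMono f → StrictMono g →
          0 ≤ submatrixDet P f g) →
        ∀ k ≤ r, ∀ f g : Fin k → ℕ, StrictMono f → StrictMono g →
          0 ≤ submatrixDet (outputMatrix P) f g) := by
  refine ⟨fun R _ P hP k f g hf hg => submatrixDet_outputMatrix_mem_closure hP f g hf hg, ?_⟩
  intro R _ _ _ P hP r hTP k hk f g hf hg
  have hminors : minorsLE P k ⊆ Subsemiring.nonneg R := by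
    rintro _ ⟨k', hk', f', g', hf', hg', rfl⟩
    exact hTP k' (hk'.trans hk) f' g' hf' hg'
  exact Subsemiring.closure_le.mpr hminors (submatrixDet_outputMatrix_mem_closure hP f g hf hg)
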